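/- arXiv:2602.08931 — 2 statements merged into one kernel-verified Lean document; each statement's English description precedes it below -/
import Mathlib

section
/- Let θ₀ < 0 be a real number and let a ∈ (0, ∞]. Suppose θ : ℝ → ℝ is differentiable at every point of the interval [0, a), satisfies θ(0) = θ₀, and its derivative satisfies θ′(λ) ≤ −θ(λ)²/2 for every λ ∈ [0, a). Then a ≤ 2/|θ₀|. (In other words, a real-valued solution of the Raychaudhuri differential inequality with negative initial expansion cannot be defined for affine parameter beyond 2/|θ₀|; the expansion must blow up to −∞ within finite affine parameter.) -/
/-!
Since `θ' ≤ -θ²/2 ≤ 0`, `θ` decreases and so stays below `θ₀ < 0`. Away from zeros of `θ`,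
the inequality says `(1/θ)' = -θ'/θ² ≥ 1/2`, hence `1/θ(λ) ≥ 1/θ₀ + λ/2`. The right-hand side
vanishes at `λ = 2/|θ₀|`, which is impossible for the negative number `1/θ(λ)`; so the domain
of `θ` cannot reach that far.
-/

open Set

theorem monotoneOn_inv_sub_of_deriv_le_neg_mul_sq {θ : ℝ → ℝ} {D : Set ℝ} {k : ℝ}
    (hD : Convex ℝ D) (hdiff : ∀ x ∈ D, DifferentiableAt ℝ θ x) (hne : ∀ x ∈ D, θ x ≠ 0)
    (hineq : ∀ x ∈ D, deriv θ x ≤ -k * θ x ^ 2) :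
    MonotoneOn (fun x => (θ x)⁻¹ - k * x) D := by
  have hdiff' : ∀ x ∈ D, DifferentiableAt ℝ (fun x => (θ x)⁻¹ - k * x) x := fun x hx =>
    ((hdiff x hx).inv (hne x hx)).sub (differentiableAt_id.const_mul k)
  refine monotoneOn_of_deriv_nonneg hD
    (fun x hx => (hdiff' x hx).continuousAt.continuousWithinAt)
    (fun x hx => (hdiff' x (interior_subset hx)).differentiableWithinAt) fun x hx => ?_
  replace hx := interior_subset hx
  have hderiv : deriv (fun x => (θ x)⁻¹ - k * x) x = -deriv θ x / θ x ^ 2 - k * 1 :=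
    (((hdiff x hx).hasDerivAt.inv (hne x hx)).sub ((hasDerivAt_id x).const_mul k)).deriv
  have hsq : 0 < θ x ^ 2 := sq_pos_of_ne_zero (hne x hx)
  rw [hderiv, mul_one, sub_nonneg, le_div_iff₀ hsq]
  linarith [hineq x hx]

theorem mul_lt_neg_inv_of_deriv_le_neg_mul_sq {θ : ℝ → ℝ} {k c : ℝ} (hk : 0 ≤ k) (hc : 0 ≤ c)
    (hdiff : ∀ x ∈ Icc 0 c, DifferentiableAt ℝ θ x)
    (hineq : ∀ x ∈ Icc 0 c, deriv θ x ≤ -k * θ x ^ 2) (hθ0 : θ 0 < 0) :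
    k * c < -(θ 0)⁻¹ := by
  have hanti : AntitoneOn θ (Icc 0 c) :=
    antitoneOn_of_deriv_nonpos (convex_Icc 0 c)
      (fun x hx => (hdiff x hx).continuousAt.continuousWithinAt)
      (fun x hx => (hdiff x (interior_subset hx)).differentiableWithinAt) fun x hx =>
        (hineq x (interior_subset hx)).trans (by nlinarith [sq_nonneg (θ x)])
  have hneg : ∀ x ∈ Icc 0 c, θ x < 0 := fun x hx =>
    (hanti (left_mem_Icc.2 hc) hx hx.1).trans_lt hθ0
  have hmono := monotoneOn_inv_sub_of_deriv_le_neg_mul_sq (convex_Icc 0 c) hdiff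
    (fun x hx => (hneg x hx).ne) hineq (left_mem_Icc.2 hc) (right_mem_Icc.2 hc) hc
  have hθc : (θ c)⁻¹ < 0 := inv_lt_zero.2 (hneg c (right_mem_Icc.2 hc))
  simp only [mul_zero, sub_zero] at hmono
  linarith

theorem raychaudhuri_focusing_blowup_general (θ₀ : ℝ) (hθ₀ : θ₀ < 0) (a : EReal)
    (θ : ℝ → ℝ)
    (hdiff : ∀ l : ℝ, 0 ≤ l → (l : EReal) < a → DifferentiableAt ℝ θ l)
    (h0 : θ 0 = θ₀)
    (hineq : ∀ l : ℝ, 0 ≤ l → (l : EReal) < a → deriv θ l ≤ -(θ l) ^ 2 / 2) :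
    a ≤ ((2 / |θ₀| : ℝ) : EReal) := by
  by_contra! hlt
  have hdom : ∀ x ∈ Icc 0 (2 / |θ₀|), (x : EReal) < a := fun x hx =>
    (EReal.coe_le_coe_iff.2 hx.2).trans_lt hlt
  have hblow := mul_lt_neg_inv_of_deriv_le_neg_mul_sq (k := 1 / 2) (by norm_num)
    (by positivity) (fun x hx => hdiff x hx.1 (hdom x hx))
    (fun x hx => (hineq x hx.1 (hdom x hx)).trans_eq (by ring)) (h0 ▸ hθ₀)
  rw [h0, abs_of_neg hθ₀] at hblow
  field_simp at hblow
  linarith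

/-- Focusing step of Penrose's 1965 singularity theorem: a real-valued solution of the
Raychaudhuri differential inequality `θ' ≤ -θ²/2` on `[0, a)` with negative initial
expansion `θ₀` cannot be defined beyond affine parameter `2/|θ₀|`. Here `a ∈ (0, ∞]`
is modeled as an extended real number. -/
theorem raychaudhuri_focusing_blowup (θ₀ : ℝ) (hθ₀ : θ₀ < 0) (a : EReal) (ha : 0 < a)
    (θ : ℝ → ℝ)
    (hdiff : ∀ l : ℝ, 0 ≤ l → (l : EReal) < a → DifferentiableAt ℝ θ l)
    (h0 : θ 0 = θ₀)
    (hineq : ∀ l : ℝ, 0 ≤ l → (l : EReal) < a → deriv θ l ≤ -(θ l) ^ 2 / 2) :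
    a ≤ ((2 / |θ₀| : ℝ) : EReal) :=
  raychaudhuri_focusing_blowup_general θ₀ hθ₀ a θ hdiff h0 hineq
end

section
/- Let θ₀ < 0 be a real number and let a ∈ (0, ∞]. Suppose θ : ℝ → ℝ is differentiable at every point of [0, a), satisfies θ(0) = θ₀, and θ′(λ) ≤ −θ(λ)²/2 for every λ ∈ [0, a). Then for every λ ∈ [0, a) with λ < 2/|θ₀| one has 2 + θ₀·λ > 0 and θ(λ) ≤ 2θ₀/(2 + θ₀·λ). (The expansion is dominated from above by the exact Riccati solution, which diverges to −∞ at λ = 2/|θ₀|.) -/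
/-!
Along the congruence `θ` is nonincreasing, so it stays negative, and then `θ' ≤ -θ²/2` says
exactly that `(1/θ)' ≥ 1/2`. Integrating, `1/θ(λ) ≥ 1/θ₀ + λ/2 = (2 + θ₀λ)/(2θ₀)`, and
inverting this inequality between negative numbers gives the Riccati bound.
-/

open Set

variable {f : ℝ → ℝ} {c x y : ℝ}

lemma antitoneOn_Icc_of_deriv_le_neg_mul_sq (hc : 0 ≤ c) (hcont : ContinuousOn f (Icc x y))
    (hdiff : DifferentiableOn ℝ f (Ioo x y)) (h : ∀ t ∈ Ioo x y, deriv f t ≤ -c * f t ^ 2) :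
    AntitoneOn f (Icc x y) := by
  refine antitoneOn_of_deriv_nonpos (convex_Icc x y) hcont (by rwa [interior_Icc]) fun t ht => ?_
  rw [interior_Icc] at ht
  nlinarith [h t ht, sq_nonneg (f t)]

lemma le_deriv_inv_of_deriv_le_neg_mul_sq (hf : DifferentiableAt ℝ f x) (hx : f x ≠ 0)
    (h : deriv f x ≤ -c * f x ^ 2) : c ≤ deriv (fun t => (f t)⁻¹) x := by
  rw [deriv_fun_inv'' hf hx, le_div_iff₀ (by positivity)]
  linarith

lemma inv_add_mul_le_inv_of_deriv_le_neg_mul_sq (hxy : x ≤ y) (hcont : ContinuousOn f (Icc x y))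
    (hdiff : DifferentiableOn ℝ f (Ioo x y)) (hne : ∀ t ∈ Icc x y, f t ≠ 0)
    (h : ∀ t ∈ Ioo x y, deriv f t ≤ -c * f t ^ 2) : (f x)⁻¹ + c * (y - x) ≤ (f y)⁻¹ := by
  have hdiffAt : ∀ t ∈ Ioo x y, DifferentiableAt ℝ f t := fun t ht =>
    hdiff.differentiableAt (isOpen_Ioo.mem_nhds ht)
  have hne' : ∀ t ∈ Ioo x y, f t ≠ 0 := fun t ht => hne t (Ioo_subset_Icc_self ht)
  have key := (convex_Icc x y).mul_sub_le_image_sub_of_le_deriv (f := fun t => (f t)⁻¹)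
    (hcont.inv₀ hne)
    (by rw [interior_Icc]; exact fun t ht => ((hdiffAt t ht).inv (hne' t ht)).differentiableWithinAt)
    (by rw [interior_Icc]; exact fun t ht =>
      le_deriv_inv_of_deriv_le_neg_mul_sq (hdiffAt t ht) (hne' t ht) (h t ht))
    x (left_mem_Icc.2 hxy) y (right_mem_Icc.2 hxy) hxy
  linarith

theorem raychaudhuri_riccati_comparison_general (θ₀ : ℝ) (hθ₀ : θ₀ < 0) (a : EReal)
    (θ : ℝ → ℝ)
    (hdiff : ∀ l : ℝ, 0 ≤ l → (l : EReal) < a → DifferentiableAt ℝ θ l)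
    (h0 : θ 0 = θ₀)
    (hineq : ∀ l : ℝ, 0 ≤ l → (l : EReal) < a → deriv θ l ≤ -(θ l) ^ 2 / 2) :
    ∀ l : ℝ, 0 ≤ l → (l : EReal) < a → l < 2 / |θ₀| →
      0 < 2 + θ₀ * l ∧ θ l ≤ 2 * θ₀ / (2 + θ₀ * l) := by
  intro l hl0 hla hl2
  have hpos : 0 < 2 + θ₀ * l := by
    rw [abs_of_neg hθ₀, lt_div_iff₀ (neg_pos.2 hθ₀)] at hl2
    linarith
  have hdom : ∀ t ∈ Icc 0 l, 0 ≤ t ∧ (t : EReal) < a := fun t ht =>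
    ⟨ht.1, (EReal.coe_le_coe_iff.2 ht.2).trans_lt hla⟩
  have hdiffOn : DifferentiableOn ℝ θ (Icc 0 l) := fun t ht =>
    (hdiff t (hdom t ht).1 (hdom t ht).2).differentiableWithinAt
  have hriccati : ∀ t ∈ Ioo 0 l, deriv θ t ≤ -(1 / 2) * θ t ^ 2 := fun t ht => by
    linarith [hineq t (hdom t (Ioo_subset_Icc_self ht)).1 (hdom t (Ioo_subset_Icc_self ht)).2]
  have hanti : AntitoneOn θ (Icc 0 l) := antitoneOn_Icc_of_deriv_le_neg_mul_sq (by norm_num)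
    hdiffOn.continuousOn (hdiffOn.mono Ioo_subset_Icc_self) hriccati
  have hneg : ∀ t ∈ Icc 0 l, θ t < 0 := fun t ht =>
    ((hanti (left_mem_Icc.2 hl0) ht ht.1).trans_eq h0).trans_lt hθ₀
  have hinv := inv_add_mul_le_inv_of_deriv_le_neg_mul_sq hl0 hdiffOn.continuousOn
    (hdiffOn.mono Ioo_subset_Icc_self) (fun t ht => (hneg t ht).ne) hriccati
  have hsol : θ₀⁻¹ + 1 / 2 * (l - 0) = (2 + θ₀ * l) / (2 * θ₀) := by
    field_simp [hθ₀.ne]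
    ring
  rw [h0, hsol] at hinv
  refine ⟨hpos, ?_⟩
  rwa [← inv_div, le_inv_of_neg (hneg l (right_mem_Icc.2 hl0))
    (div_neg_of_pos_of_neg hpos (by linarith))]

/-- Comparison form of the focusing step of Penrose's theorem: under the Raychaudhuri
differential inequality `θ' ≤ -θ²/2` on `[0, a)` (with `a ∈ (0, ∞]` modeled as an
extended real) and `θ 0 = θ₀ < 0`, for every `λ ∈ [0, a)` with `λ < 2/|θ₀|` one has
`2 + θ₀·λ > 0` and `θ(λ) ≤ 2θ₀/(2 + θ₀·λ)`: the expansion is dominated from above by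
the exact Riccati solution. -/
theorem raychaudhuri_riccati_comparison (θ₀ : ℝ) (hθ₀ : θ₀ < 0) (a : EReal) (ha : 0 < a)
    (θ : ℝ → ℝ)
    (hdiff : ∀ l : ℝ, 0 ≤ l → (l : EReal) < a → DifferentiableAt ℝ θ l)
    (h0 : θ 0 = θ₀)
    (hineq : ∀ l : ℝ, 0 ≤ l → (l : EReal) < a → deriv θ l ≤ -(θ l) ^ 2 / 2) :
    ∀ l : ℝ, 0 ≤ l → (l : EReal) < a → l < 2 / |θ₀| →
      0 < 2 + θ₀ * l ∧ θ l ≤ 2 * θ₀ / (2 + θ₀ * l) :=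
  raychaudhuri_riccati_comparison_general θ₀ hθ₀ a θ hdiff h0 hineq
end
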